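/- arXiv:1709.06422 — 5 statements merged into one kernel-verified Lean document; each statement's English description precedes it below -/
import Mathlib

section
/- Let H and K be real inner product spaces and D : H → K a linear map. Let u_1, …, u_S be vectors in H, let C ∈ ℝ^{S×S} be the Gram matrix with entries C_{kl} = ⟨u_k, u_l⟩, let a_1, …, a_S ∈ ℝ^S be an orthonormal basis of eigenvectors of C with corresponding eigenvalues λ_1 ≥ … ≥ λ_S ≥ 0, and let r be the number of positive eigenvalues. For 1 ≤ i ≤ r define φ_i := λ_i^{−1/2} Σ_{k=1}^S (a_i)_k u_k, and for 1 ≤ R ≤ r define Π_R v := Σ_{i=1}^R ⟨v, φ_i⟩ φ_i. Then Σ_{k=1}^S ‖D(u_k − Π_R u_k)‖² = Σ_{i=R+1}^r λ_i ‖Dφ_i‖². -/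
open RealInnerProductSpace

/-- The D-seminorm (H¹-seminorm) snapshot projection-error identity (Lemma 5.2): for the
POD basis built from the eigenpairs of the snapshot Gram matrix, a linear map `D : H → K`,
and any `1 ≤ R ≤ r`,
`Σ_k ‖D(u_k − Π_R u_k)‖² = Σ_{i=R+1}^r μ_i ‖Dφ_i‖²`,
where `Π_R v = Σ_{i=1}^R ⟨v, φ_i⟩ φ_i`. -/
theorem pod_gradient_projection_error_identity
    {H K : Type*} [NormedAddCommGroup H] [InnerProductSpace ℝ H]
    [NormedAddCommGroup K] [InnerProductSpace ℝ K]
    (D : H →ₗ[ℝ] K)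
    {S : ℕ} (u : Fin S → H)
    (C : Matrix (Fin S) (Fin S) ℝ) (hC : ∀ k l, C k l = ⟪u k, u l⟫)
    (a : Fin S → (Fin S → ℝ)) (μ : Fin S → ℝ)
    (heig : ∀ i, C.mulVec (a i) = μ i • a i)
    (horth : ∀ i j, ∑ k, a i k * a j k = if i = j then (1 : ℝ) else 0)
    (hmono : ∀ i j : Fin S, i ≤ j → μ j ≤ μ i)
    (hnonneg : ∀ i, 0 ≤ μ i)
    (r : ℕ) (hr : ∀ i : Fin S, ((i : ℕ) < r ↔ 0 < μ i))
    (φ : Fin S → H)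
    (hφ : ∀ i : Fin S, (i : ℕ) < r →
      φ i = (Real.sqrt (μ i))⁻¹ • ∑ k, a i k • u k)
    (R : ℕ) (hR1 : 1 ≤ R) (hRr : R ≤ r)
    (P : H → H)
    (hP : ∀ v, P v = ∑ i ∈ Finset.univ.filter (fun i : Fin S => (i : ℕ) < R),
      ⟪v, φ i⟫ • φ i) :
    ∑ k, ‖D (u k - P (u k))‖ ^ 2 =
      ∑ i ∈ Finset.univ.filter (fun i : Fin S => R ≤ (i : ℕ) ∧ (i : ℕ) < r),
        μ i * ‖D (φ i)‖ ^ 2 := by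
  classical
  -- column orthonormality of the eigenvector matrix
  set A : Matrix (Fin S) (Fin S) ℝ := Matrix.of a with hA
  have hAAt : A * A.transpose = 1 := by
    ext i j
    simpa [Matrix.mul_apply, Matrix.transpose_apply, hA, Matrix.one_apply] using horth i j
  have hcol : ∀ k l, ∑ i, a i k * a i l = if k = l then (1 : ℝ) else 0 := by
    intro k l
    have h1 : A.transpose * A = 1 := mul_eq_one_comm.mp hAAt
    have h2 := congrFun (congrFun h1 k) l
    simpa [Matrix.mul_apply, Matrix.transpose_apply, hA, Matrix.one_apply] using h2
  set w : Fin S → H := fun i => ∑ k, a i k • u k with hw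
  have huw : ∀ l i, ⟪u l, w i⟫ = μ i * a i l := by
    intro l i
    have h1 : ⟪u l, w i⟫ = ∑ k, a i k * ⟪u l, u k⟫ := by
      simp [hw, inner_sum, real_inner_smul_right]
    have h2 : C.mulVec (a i) l = μ i * a i l := by
      rw [heig]; simp
    rw [h1, ← h2]
    simp only [Matrix.mulVec, dotProduct, hC]
    exact Finset.sum_congr rfl fun k _ => mul_comm _ _
  have hww : ∀ i j, ⟪w i, w j⟫ = μ j * (if i = j then (1 : ℝ) else 0) := by
    intro i j
    have h1 : ⟪w i, w j⟫ = ∑ l, a i l * ⟪u l, w j⟫ := by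
      simp [hw, sum_inner, real_inner_smul_left]
    rw [h1]
    simp only [huw]
    have : ∑ l, a i l * (μ j * a j l) = μ j * ∑ l, a i l * a j l := by
      rw [Finset.mul_sum]; exact Finset.sum_congr rfl fun l _ => by ring
    rw [this, horth]
  have hwzero : ∀ i : Fin S, ¬ ((i : ℕ) < r) → w i = 0 := by
    intro i hi
    have hμ : μ i = 0 := by
      have := (hr i).not.mp hi
      exact le_antisymm (not_lt.mp this) (hnonneg i)
    have : ⟪w i, w i⟫ = 0 := by rw [hww i i]; simp [hμ]
    exact inner_self_eq_zero.mp this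
  have hwφ : ∀ i : Fin S, (i : ℕ) < r → w i = Real.sqrt (μ i) • φ i := by
    intro i hi
    have hμ : 0 < μ i := (hr i).mp hi
    have hs : Real.sqrt (μ i) ≠ 0 := by positivity
    rw [hφ i hi, smul_smul, mul_inv_cancel₀ hs, one_smul]
  have hudec : ∀ k, u k = ∑ i, a i k • w i := by
    intro k
    have h1 : ∑ i, a i k • w i = ∑ l, (∑ i, a i k * a i l) • u l := by
      simp only [hw, Finset.smul_sum, smul_smul]
      rw [Finset.sum_comm]
      simp [Finset.sum_smul]
    rw [h1]
    simp [hcol, ite_smul]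
  have hPuk : ∀ k, P (u k) =
      ∑ i ∈ Finset.univ.filter (fun i : Fin S => (i : ℕ) < R), a i k • w i := by
    intro k
    rw [hP]
    refine Finset.sum_congr rfl fun i hi => ?_
    have hiR : (i : ℕ) < R := (Finset.mem_filter.mp hi).2
    have hir : (i : ℕ) < r := lt_of_lt_of_le hiR hRr
    have hμ : 0 < μ i := (hr i).mp hir
    have hs : Real.sqrt (μ i) ≠ 0 := by positivity
    have hinner : ⟪u k, φ i⟫ = Real.sqrt (μ i) * a i k := by
      rw [hφ i hir, real_inner_smul_right]
      rw [show (∑ k', a i k' • u k') = w i from rfl, huw]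
      field_simp
      linear_combination (-(a i k)) * Real.mul_self_sqrt hμ.le
    rw [hinner, hwφ i hir, smul_smul, mul_comm]
  have hdiff : ∀ k, u k - P (u k) =
      ∑ i ∈ Finset.univ.filter (fun i : Fin S => R ≤ (i : ℕ)), a i k • w i := by
    intro k
    rw [hPuk]
    conv_lhs => rw [hudec k]
    rw [← Finset.sum_filter_add_sum_filter_not Finset.univ
      (fun i : Fin S => (i : ℕ) < R) (fun i => a i k • w i)]
    rw [add_sub_cancel_left]
    apply Finset.sum_congr _ fun _ _ => rfl
    apply Finset.filter_congr
    intro i _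
    simp [not_lt]
  set T := Finset.univ.filter (fun i : Fin S => R ≤ (i : ℕ)) with hT
  have hDdiff : ∀ k, D (u k - P (u k)) = ∑ i ∈ T, a i k • D (w i) := by
    intro k
    rw [hdiff, map_sum]
    exact Finset.sum_congr rfl fun i _ => map_smul D _ _
  have hmain : ∑ k, ‖D (u k - P (u k))‖ ^ 2 = ∑ i ∈ T, ‖D (w i)‖ ^ 2 := by
    have hterm : ∀ k, ‖D (u k - P (u k))‖ ^ 2 =
        ∑ i ∈ T, ∑ j ∈ T, (a i k * a j k) * ⟪D (w i), D (w j)⟫ := by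
      intro k
      rw [← real_inner_self_eq_norm_sq, hDdiff]
      rw [sum_inner]
      refine Finset.sum_congr rfl fun i _ => ?_
      rw [real_inner_smul_left, inner_sum, Finset.mul_sum]
      refine Finset.sum_congr rfl fun j _ => ?_
      rw [real_inner_smul_right]
      ring
    calc ∑ k, ‖D (u k - P (u k))‖ ^ 2
        = ∑ k, ∑ i ∈ T, ∑ j ∈ T, (a i k * a j k) * ⟪D (w i), D (w j)⟫ := by
          exact Finset.sum_congr rfl fun k _ => hterm k
      _ = ∑ i ∈ T, ∑ j ∈ T, (∑ k, a i k * a j k) * ⟪D (w i), D (w j)⟫ := by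
          rw [Finset.sum_comm]
          refine Finset.sum_congr rfl fun i _ => ?_
          rw [Finset.sum_comm]
          refine Finset.sum_congr rfl fun j _ => ?_
          rw [Finset.sum_mul]
      _ = ∑ i ∈ T, ∑ j ∈ T, (if i = j then (1 : ℝ) else 0) * ⟪D (w i), D (w j)⟫ := by
          refine Finset.sum_congr rfl fun i _ => Finset.sum_congr rfl fun j _ => ?_
          rw [horth]
      _ = ∑ i ∈ T, ‖D (w i)‖ ^ 2 := by
          refine Finset.sum_congr rfl fun i hi => ?_
          have hite : ∀ j ∈ T, (if i = j then (1 : ℝ) else 0) * ⟪D (w i), D (w j)⟫ =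
              if i = j then ⟪D (w i), D (w j)⟫ else 0 := fun j _ => by split <;> simp
          rw [Finset.sum_congr rfl hite, Finset.sum_ite_eq T i, if_pos hi,
            real_inner_self_eq_norm_sq]
  rw [hmain]
  rw [← Finset.sum_filter_add_sum_filter_not T (fun i : Fin S => (i : ℕ) < r)
    (fun i => ‖D (w i)‖ ^ 2)]
  have hzero : ∑ i ∈ T.filter (fun i : Fin S => ¬ (i : ℕ) < r), ‖D (w i)‖ ^ 2 = 0 := by
    refine Finset.sum_eq_zero fun i hi => ?_
    have := (Finset.mem_filter.mp hi).2
    rw [hwzero i this]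
    simp
  rw [hzero, add_zero, hT, Finset.filter_filter]
  refine Finset.sum_congr rfl fun i hi => ?_
  have hir : (i : ℕ) < r := (Finset.mem_filter.mp hi).2.2
  rw [hwφ i hir, map_smul, norm_smul, Real.norm_eq_abs,
    abs_of_nonneg (Real.sqrt_nonneg _), mul_pow, Real.sq_sqrt (hnonneg i)]
end

section
/- Let H and K be real inner product spaces and D : H → K a linear map. Let u_1, …, u_S be vectors in H, let C ∈ ℝ^{S×S} be the Gram matrix with entries C_{kl} = ⟨u_k, u_l⟩, let a_1, …, a_S ∈ ℝ^S be an orthonormal basis of eigenvectors of C with corresponding eigenvalues λ_1 ≥ … ≥ λ_S ≥ 0, and let r be the number of positive eigenvalues. For 1 ≤ i ≤ r define φ_i := λ_i^{−1/2} Σ_{k=1}^S (a_i)_k u_k, and for 1 ≤ R ≤ r define Π_R v := Σ_{i=1}^R ⟨v, φ_i⟩ φ_i. Then for every subset G ⊆ {1, …, S}, Σ_{k∈G} ‖D(u_k − Π_R u_k)‖² ≤ Σ_{i=R+1}^r λ_i ‖Dφ_i‖². -/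
/-!
Write `v i = ∑ k, a i k • u k`. Since `C` is the Gram matrix of `u`,
`‖v i‖² = a i ⬝ᵥ C *ᵥ a i = μ i`, so `v i = 0` once `μ i ≤ 0`, and `v i = √(μ i) • φ i`
otherwise; hence `⟪u k, φ i⟫ • φ i = a i k • v i` for `i < r`. Inverting the orthogonal matrix `a`
gives `u k = ∑ i, a i k • v i`, so `u k - P (u k) = ∑_{R ≤ i < r} a i k • v i`. Summing `‖D ·‖²`
of this over all `k`, orthonormality of the rows of `a` kills the cross terms and leaves
`∑_{R ≤ i < r} ‖D (v i)‖² = ∑_{R ≤ i < r} μ i ‖D (φ i)‖²`, which bounds the sum over `G`.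
-/

open RealInnerProductSpace Matrix Finset

section OrthonormalRows

variable {ι κ : Type*} [Fintype κ] [DecidableEq ι] {a : ι → κ → ℝ}

theorem sum_norm_sq_sum_smul_of_orthonormal_rows
    {E : Type*} [NormedAddCommGroup E] [InnerProductSpace ℝ E]
    (horth : ∀ i j, ∑ k, a i k * a j k = if i = j then 1 else 0) (s : Finset ι) (w : ι → E) :
    ∑ k, ‖∑ i ∈ s, a i k • w i‖ ^ 2 = ∑ i ∈ s, ‖w i‖ ^ 2 := by
  calc ∑ k, ‖∑ i ∈ s, a i k • w i‖ ^ 2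
      = ∑ i ∈ s, ∑ j ∈ s, (∑ k, a i k * a j k) * ⟪w i, w j⟫ := by
        simp_rw [← real_inner_self_eq_norm_sq, sum_inner, inner_sum, real_inner_smul_left,
          real_inner_smul_right, sum_mul]
        rw [sum_comm]
        refine sum_congr rfl fun i _ => ?_
        rw [sum_comm]
        exact sum_congr rfl fun j _ => sum_congr rfl fun k _ => by ring
    _ = ∑ i ∈ s, ‖w i‖ ^ 2 := by
        simp_rw [horth, ite_mul, one_mul, zero_mul, sum_ite_eq, real_inner_self_eq_norm_sq]
        exact sum_congr rfl fun i hi => if_pos hi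

end OrthonormalRows

section OrthogonalMatrix

variable {ι : Type*} [Fintype ι] [DecidableEq ι] {a : ι → ι → ℝ}

theorem orthonormal_columns_of_orthonormal_rows
    (horth : ∀ i j, ∑ k, a i k * a j k = if i = j then 1 else 0) (k l : ι) :
    ∑ i, a i k * a i l = if k = l then 1 else 0 := by
  have hrows : of a * (of a)ᵀ = 1 := by
    ext i j
    simpa [mul_apply, one_apply] using horth i j
  have hcols : (of a)ᵀ * of a = 1 := mul_eq_one_comm.mp hrows
  simpa [mul_apply, one_apply] using congrFun (congrFun hcols k) l

theorem sum_smul_sum_smul_of_orthonormal_columns {M : Type*} [AddCommGroup M] [Module ℝ M]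
    (hcol : ∀ k l, ∑ i, a i k * a i l = if k = l then 1 else 0) (u : ι → M) (k : ι) :
    ∑ i, a i k • ∑ l, a i l • u l = u k := by
  simp_rw [smul_sum, smul_smul]
  rw [sum_comm]
  simp_rw [← sum_smul, hcol, ite_smul, one_smul, zero_smul, sum_ite_eq,
    if_pos (mem_univ _)]

end OrthogonalMatrix

section GramMatrix

variable {ι E : Type*} [Fintype ι] [NormedAddCommGroup E] [InnerProductSpace ℝ E]

theorem inner_sum_smul_eq_dotProduct_gram_mulVec (u : ι → E) (x y : ι → ℝ) :
    ⟪∑ k, x k • u k, ∑ k, y k • u k⟫ = x ⬝ᵥ gram ℝ u *ᵥ y := by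
  simpa using (star_dotProduct_gram_mulVec u x y).symm

theorem inner_sum_smul_right_eq_gram_mulVec (u : ι → E) (x : ι → ℝ) (k : ι) :
    ⟪u k, ∑ l, x l • u l⟫ = (gram ℝ u *ᵥ x) k := by
  simp [inner_sum, real_inner_smul_right, mulVec, dotProduct, mul_comm]

variable {u : ι → E}

theorem inner_smul_of_gram_eigenvector {x : ι → ℝ} {m : ℝ} (hx : gram ℝ u *ᵥ x = m • x)
    (hm : 0 < m) (k : ι) :
    ⟪u k, (Real.sqrt m)⁻¹ • ∑ l, x l • u l⟫ • ((Real.sqrt m)⁻¹ • ∑ l, x l • u l) =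
      x k • ∑ l, x l • u l := by
  have hsqrt_ne : Real.sqrt m ≠ 0 := (Real.sqrt_pos.mpr hm).ne'
  rw [real_inner_smul_right, inner_sum_smul_right_eq_gram_mulVec, hx, Pi.smul_apply, smul_eq_mul,
    smul_smul]
  congr 1
  field_simp
  rw [Real.sq_sqrt hm.le]

theorem sum_smul_eq_zero_of_gram_eigenvalue_nonpos {x : ι → ℝ} {m : ℝ}
    (hx : gram ℝ u *ᵥ x = m • x) (hnorm : ∑ k, x k * x k = 1) (hm : m ≤ 0) :
    ∑ k, x k • u k = 0 := by
  have hsq : ‖∑ k, x k • u k‖ ^ 2 = m := by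
    rw [← real_inner_self_eq_norm_sq, inner_sum_smul_eq_dotProduct_gram_mulVec, hx,
      dotProduct_smul, dotProduct, hnorm, smul_eq_mul, mul_one]
  exact norm_eq_zero.mp (pow_eq_zero_iff two_ne_zero |>.mp
    (le_antisymm (hsq ▸ hm) (sq_nonneg _)))

end GramMatrix

theorem sum_sub_sum_filter_lt_of_eq_zero {M : Type*} [AddCommGroup M] {n : ℕ} (R r : ℕ)
    (f : Fin n → M) (hf : ∀ i : Fin n, r ≤ (i : ℕ) → f i = 0) :
    ∑ i, f i - ∑ i ∈ univ.filter (fun i : Fin n => (i : ℕ) < R), f i =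
      ∑ i ∈ univ.filter (fun i : Fin n => R ≤ (i : ℕ) ∧ (i : ℕ) < r), f i := by
  rw [← sum_filter_add_sum_filter_not univ (fun i : Fin n => (i : ℕ) < R), add_sub_cancel_left]
  refine (sum_subset (fun i hi => ?_) fun i hi hi' => hf i ?_).symm
  · simp only [mem_filter, mem_univ, true_and] at hi ⊢
    omega
  · simp only [mem_filter, mem_univ, true_and, not_lt] at hi hi'
    omega

theorem pod_gradient_projection_error_subset_bound_general
    {H K : Type*} [NormedAddCommGroup H] [InnerProductSpace ℝ H]
    [NormedAddCommGroup K] [InnerProductSpace ℝ K]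
    (D : H →ₗ[ℝ] K)
    {S : ℕ} (u : Fin S → H)
    (C : Matrix (Fin S) (Fin S) ℝ) (hC : ∀ k l, C k l = ⟪u k, u l⟫)
    (a : Fin S → (Fin S → ℝ)) (μ : Fin S → ℝ)
    (heig : ∀ i, C.mulVec (a i) = μ i • a i)
    (horth : ∀ i j, ∑ k, a i k * a j k = if i = j then (1 : ℝ) else 0)
    (r : ℕ) (hr : ∀ i : Fin S, ((i : ℕ) < r ↔ 0 < μ i))
    (φ : Fin S → H)
    (hφ : ∀ i : Fin S, (i : ℕ) < r →
      φ i = (Real.sqrt (μ i))⁻¹ • ∑ k, a i k • u k)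
    (R : ℕ) (hRr : R ≤ r)
    (P : H → H)
    (hP : ∀ v, P v = ∑ i ∈ Finset.univ.filter (fun i : Fin S => (i : ℕ) < R),
      ⟪v, φ i⟫ • φ i)
    (G : Finset (Fin S)) :
    ∑ k ∈ G, ‖D (u k - P (u k))‖ ^ 2 ≤
      ∑ i ∈ Finset.univ.filter (fun i : Fin S => R ≤ (i : ℕ) ∧ (i : ℕ) < r),
        μ i * ‖D (φ i)‖ ^ 2 := by
  set v : Fin S → H := fun i => ∑ k, a i k • u k
  obtain rfl : C = gram ℝ u := Matrix.ext hC
  have hv_zero (i : Fin S) (hi : ¬ (i : ℕ) < r) : v i = 0 :=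
    sum_smul_eq_zero_of_gram_eigenvalue_nonpos (heig i) (by simpa using horth i i)
      (not_lt.mp ((hr i).not.mp hi))
  have hv_smul (i : Fin S) (hi : (i : ℕ) < r) : v i = Real.sqrt (μ i) • φ i := by
    rw [hφ i hi, smul_smul, mul_inv_cancel₀ (Real.sqrt_pos.mpr ((hr i).mp hi)).ne', one_smul]
  have hproj (k i : Fin S) (hi : (i : ℕ) < r) : ⟪u k, φ i⟫ • φ i = a i k • v i := by
    rw [hφ i hi]
    exact inner_smul_of_gram_eigenvector (heig i) ((hr i).mp hi) k
  have herr (k : Fin S) : u k - P (u k) =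
      ∑ i ∈ univ.filter (fun i : Fin S => R ≤ (i : ℕ) ∧ (i : ℕ) < r), a i k • v i := by
    have hu : u k = ∑ i, a i k • v i :=
      (sum_smul_sum_smul_of_orthonormal_columns (orthonormal_columns_of_orthonormal_rows horth)
        u k).symm
    rw [hP, sum_congr rfl fun i hi => hproj k i ((mem_filter.mp hi).2.trans_le hRr), hu]
    exact sum_sub_sum_filter_lt_of_eq_zero R r _ fun i hi => by
      rw [hv_zero i (not_lt.mpr hi), smul_zero]
  calc ∑ k ∈ G, ‖D (u k - P (u k))‖ ^ 2
      ≤ ∑ k, ‖D (u k - P (u k))‖ ^ 2 :=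
        sum_le_sum_of_subset_of_nonneg (subset_univ G) fun _ _ _ => by positivity
    _ = ∑ i ∈ univ.filter (fun i : Fin S => R ≤ (i : ℕ) ∧ (i : ℕ) < r), ‖D (v i)‖ ^ 2 := by
        simp_rw [herr, map_sum, map_smul]
        exact sum_norm_sq_sum_smul_of_orthonormal_rows horth _ _
    _ = _ := by
        refine sum_congr rfl fun i hi => ?_
        rw [hv_smul i (mem_filter.mp hi).2.2, map_smul, norm_smul, mul_pow, Real.norm_eq_abs,
          sq_abs, Real.sq_sqrt (hr i |>.mp (mem_filter.mp hi).2.2).le]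

/-- The per-ensemble-member D-seminorm snapshot projection-error bound (second display of
Lemma 5.2): for the POD basis built from the eigenpairs of the snapshot Gram matrix, a
linear map `D : H → K`, any `1 ≤ R ≤ r`, and any subset `G` of the snapshot indices,
`Σ_{k ∈ G} ‖D(u_k − Π_R u_k)‖² ≤ Σ_{i=R+1}^r μ_i ‖Dφ_i‖²`,
where `Π_R v = Σ_{i=1}^R ⟨v, φ_i⟩ φ_i`. -/
theorem pod_gradient_projection_error_subset_bound
    {H K : Type*} [NormedAddCommGroup H] [InnerProductSpace ℝ H]
    [NormedAddCommGroup K] [InnerProductSpace ℝ K]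
    (D : H →ₗ[ℝ] K)
    {S : ℕ} (u : Fin S → H)
    (C : Matrix (Fin S) (Fin S) ℝ) (hC : ∀ k l, C k l = ⟪u k, u l⟫)
    (a : Fin S → (Fin S → ℝ)) (μ : Fin S → ℝ)
    (heig : ∀ i, C.mulVec (a i) = μ i • a i)
    (horth : ∀ i j, ∑ k, a i k * a j k = if i = j then (1 : ℝ) else 0)
    (hmono : ∀ i j : Fin S, i ≤ j → μ j ≤ μ i)
    (hnonneg : ∀ i, 0 ≤ μ i)
    (r : ℕ) (hr : ∀ i : Fin S, ((i : ℕ) < r ↔ 0 < μ i))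
    (φ : Fin S → H)
    (hφ : ∀ i : Fin S, (i : ℕ) < r →
      φ i = (Real.sqrt (μ i))⁻¹ • ∑ k, a i k • u k)
    (R : ℕ) (hR1 : 1 ≤ R) (hRr : R ≤ r)
    (P : H → H)
    (hP : ∀ v, P v = ∑ i ∈ Finset.univ.filter (fun i : Fin S => (i : ℕ) < R),
      ⟪v, φ i⟫ • φ i)
    (G : Finset (Fin S)) :
    ∑ k ∈ G, ‖D (u k - P (u k))‖ ^ 2 ≤
      ∑ i ∈ Finset.univ.filter (fun i : Fin S => R ≤ (i : ℕ) ∧ (i : ℕ) < r),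
        μ i * ‖D (φ i)‖ ^ 2 :=
  pod_gradient_projection_error_subset_bound_general D u C hC a μ heig horth r hr φ hφ R hRr P hP G
end

section
/- Let H and K be real inner product spaces, let D : H → K be a linear map, let φ_1, …, φ_R be an orthonormal family in H, and define the symmetric R×R real matrix S by S_{ii'} = ⟨φ_i, φ_{i'}⟩_H + ⟨Dφ_i, Dφ_{i'}⟩_K. Let Π_R v := Σ_{i=1}^R ⟨v, φ_i⟩ φ_i denote the orthogonal projection onto span{φ_1, …, φ_R}. Then for every v ∈ H, ‖D(Π_R v)‖ ≤ ‖S‖₂^{1/2} ‖v‖, where ‖S‖₂ denotes the spectral norm of S. -/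
open RealInnerProductSpace

/-- The spectral norm of a real `R × R` matrix: the operator norm of the
associated linear map on Euclidean space. -/
noncomputable def matSpectralNorm {R : ℕ} (S : Matrix (Fin R) (Fin R) ℝ) : ℝ :=
  ‖(Matrix.toEuclideanCLM (𝕜 := ℝ) S :
      EuclideanSpace ℝ (Fin R) →L[ℝ] EuclideanSpace ℝ (Fin R))‖

open Matrix

/-! With `a = (⟪v, φ i⟫)ᵢ` the coefficient vector of `Π_R v`, the matrix `S` is the sum of the
Gram matrices of `φ` and `D ∘ φ`, so `‖Π_R v‖² + ‖D (Π_R v)‖² = aᵀ S a ≤ ‖S‖₂ ‖a‖²`; Bessel's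
inequality gives `‖a‖ ≤ ‖v‖`. -/

section

variable {ι E F : Type*} [Fintype ι] [NormedAddCommGroup E] [InnerProductSpace ℝ E]
  [NormedAddCommGroup F] [InnerProductSpace ℝ F]

theorem dotProduct_gram_mulVec_self (v : ι → E) (x : ι → ℝ) :
    x ⬝ᵥ gram ℝ v *ᵥ x = ‖∑ i, x i • v i‖ ^ 2 := by
  rw [← real_inner_self_eq_norm_sq, ← star_dotProduct_gram_mulVec, star_trivial]

theorem dotProduct_gram_add_gram_comp_mulVec_self (D : E →ₗ[ℝ] F) (v : ι → E) (x : ι → ℝ) :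
    x ⬝ᵥ (gram ℝ v + gram ℝ (D ∘ v)) *ᵥ x =
      ‖∑ i, x i • v i‖ ^ 2 + ‖D (∑ i, x i • v i)‖ ^ 2 := by
  simp [add_mulVec, dotProduct_add, dotProduct_gram_mulVec_self]

theorem Orthonormal.norm_toLp_inner_le {v : ι → E} (hv : Orthonormal ℝ v) (x : E) :
    ‖WithLp.toLp 2 (fun i => ⟪x, v i⟫)‖ ≤ ‖x‖ := by
  refine le_of_sq_le_sq ?_ (norm_nonneg x)
  simpa [EuclideanSpace.norm_sq_eq, real_inner_comm] using
    hv.sum_inner_products_le (s := Finset.univ) x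

end

theorem matSpectralNorm_nonneg {R : ℕ} (S : Matrix (Fin R) (Fin R) ℝ) : 0 ≤ matSpectralNorm S :=
  norm_nonneg _

theorem inner_toEuclideanCLM_self_le_matSpectralNorm {R : ℕ} (S : Matrix (Fin R) (Fin R) ℝ)
    (x : EuclideanSpace ℝ (Fin R)) :
    ⟪x, toEuclideanCLM (𝕜 := ℝ) S x⟫ ≤ matSpectralNorm S * ‖x‖ ^ 2 :=
  calc ⟪x, toEuclideanCLM (𝕜 := ℝ) S x⟫ ≤ ‖x‖ * ‖toEuclideanCLM (𝕜 := ℝ) S x‖ :=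
        real_inner_le_norm _ _
    _ ≤ ‖x‖ * (matSpectralNorm S * ‖x‖) := by
        gcongr; exact ContinuousLinearMap.le_opNorm _ _
    _ = matSpectralNorm S * ‖x‖ ^ 2 := by ring

/-- The POD inverse inequality, in terms of the coefficient vector `x`. -/
theorem norm_map_sum_smul_le_sqrt_matSpectralNorm_mul_norm {E F : Type*}
    [NormedAddCommGroup E] [InnerProductSpace ℝ E] [NormedAddCommGroup F] [InnerProductSpace ℝ F]
    (D : E →ₗ[ℝ] F) {R : ℕ} (φ : Fin R → E) (x : EuclideanSpace ℝ (Fin R)) :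
    ‖D (∑ i, x i • φ i)‖ ≤ √(matSpectralNorm (gram ℝ φ + gram ℝ (D ∘ φ))) * ‖x‖ := by
  set S := gram ℝ φ + gram ℝ (D ∘ φ)
  refine le_of_sq_le_sq ?_ (by positivity)
  calc ‖D (∑ i, x i • φ i)‖ ^ 2 ≤ ‖∑ i, x i • φ i‖ ^ 2 + ‖D (∑ i, x i • φ i)‖ ^ 2 :=
        le_add_of_nonneg_left (sq_nonneg _)
    _ = ⟪x, toEuclideanCLM (𝕜 := ℝ) S x⟫ := by
        rw [inner_toEuclideanCLM, dotProduct_gram_add_gram_comp_mulVec_self]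
    _ ≤ matSpectralNorm S * ‖x‖ ^ 2 := inner_toEuclideanCLM_self_le_matSpectralNorm S x
    _ = (√(matSpectralNorm S) * ‖x‖) ^ 2 := by
        rw [mul_pow, Real.sq_sqrt (matSpectralNorm_nonneg S)]

/-- D-seminorm stability of the POD projection: if `φ₁, …, φ_R` is an orthonormal family
in `H`, `D : H → K` is linear, `S` is the matrix with entries
`S_{ii'} = ⟨φ_i, φ_{i'}⟩ + ⟨Dφ_i, Dφ_{i'}⟩`, and `Π_R v = Σ_{i=1}^R ⟨v, φ_i⟩ φ_i`, then
`‖D(Π_R v)‖ ≤ ‖S‖₂^{1/2} ‖v‖` for every `v ∈ H`. -/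
theorem pod_projection_gradient_stability
    {H K : Type*} [NormedAddCommGroup H] [InnerProductSpace ℝ H]
    [NormedAddCommGroup K] [InnerProductSpace ℝ K]
    (D : H →ₗ[ℝ] K) {R : ℕ} (φ : Fin R → H) (hortho : Orthonormal ℝ φ)
    (S : Matrix (Fin R) (Fin R) ℝ)
    (hS : ∀ i i' : Fin R, S i i' = ⟪φ i, φ i'⟫ + ⟪D (φ i), D (φ i')⟫)
    (P : H → H) (hP : ∀ v, P v = ∑ i, ⟪v, φ i⟫ • φ i)
    (v : H) :
    ‖D (P v)‖ ≤ Real.sqrt (matSpectralNorm S) * ‖v‖ := by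
  obtain rfl : S = gram ℝ φ + gram ℝ (D ∘ φ) := Matrix.ext hS
  rw [hP]
  exact (norm_map_sum_smul_le_sqrt_matSpectralNorm_mul_norm D φ (WithLp.toLp 2 _)).trans
    (by gcongr; exact hortho.norm_toLp_inner_le v)
end

section
/- Let H and K be real inner product spaces, D : H → K a linear map, X_R ⊆ H a subspace, and σ ≥ 0 a constant such that ‖Dφ‖ ≤ σ^{1/2}‖φ‖ for all φ ∈ X_R. Let b : H × H × H → ℝ be a trilinear map satisfying b(w, v, v) = 0 for all w, v, and |b(w, u, v)| ≤ C_b ‖Dw‖ ‖Du‖ ‖v‖^{1/2} ‖Dv‖^{1/2} for all w, u, v ∈ X_R, for some constant C_b > 0. Let ν > 0, Δt > 0, J ≥ 1, N ≥ 1, and for each j = 1,…,J let u^{j,0}, u^{j,1}, …, u^{j,N} ∈ X_R and let F^{j,n} : H → ℝ (n = 2,…,N) be linear functionals with |F^{j,n}(v)| ≤ γ_{j,n} ‖Dv‖ for all v ∈ X_R. For n ≥ 1 define the ensemble mean ⟨u⟩^n := (1/J) Σ_{j=1}^J (2u^{j,n} − u^{j,n−1}) and the fluctuations u'^{j,n}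 := 2u^{j,n} − u^{j,n−1} − ⟨u⟩^n. Suppose that for n = 1,…,N−1 and all j, and all φ ∈ X_R, ⟨(3u^{j,n+1} − 4u^{j,n} + u^{j,n−1})/(2Δt), φ⟩ + b(⟨u⟩^n, u^{j,n+1}, φ) + b(u'^{j,n}, 2u^{j,n} − u^{j,n−1}, φ) + ν⟨Du^{j,n+1}, Dφ⟩ = F^{j,n+1}(φ), and that the time-step condition 2 C_b² σ^{1/2} (Δt/ν) ‖Du'^{j,n}‖² ≤ 1 holds for all j = 1,…,J and all n = 1,…,N−1. Then for every j and every 1 ≤ n ≤ N, (1/4)‖u^{j,n}‖² + (1/4)‖2u^{j,n} − u^{j,n−1}‖² + (νΔt/4) Σ_{n'=1}^{n−1} ‖Du^{j,n'+1}‖² ≤ (Δt/ν) Σ_{n'=1}^{n−1} γ_{j,n'+1}² + (1/4)‖u^{j,1}‖² + (1/4)‖2u^{j,1} − u^{j,0}‖². -/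
/-!
Testing the scheme with `φ = u^{j,n+1}` and using the G-stability identity of BDF2,
`⟪3a - 4b + c, a⟫ = 2(E(a,b) - E(b,c)) + ½‖a - 2b + c‖²` with `E(x,y) = ¼‖x‖² + ¼‖2x - y‖²`,
turns the equation into an energy balance. The mean-convection term vanishes by skew-symmetry,
and skew-symmetry also rewrites the fluctuation term as `b(u', u^{n+1}, u^{n+1} - 2u^n + u^{n-1})`.
The bound on `b` together with the inverse inequality, Young's inequality and the time-step
condition absorb it into the numerical dissipation `½‖u^{n+1} - 2u^n + u^{n-1}‖²` and half of the
viscous term; the forcing takes another quarter. Summing the one-step inequality gives the bound.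
-/

open RealInnerProductSpace

noncomputable def bdf2Energy {H : Type*} [NormedAddCommGroup H] [InnerProductSpace ℝ H]
    (x y : H) : ℝ :=
  (1 / 4) * ‖x‖ ^ 2 + (1 / 4) * ‖(2 : ℝ) • x - y‖ ^ 2

lemma inner_bdf2_self {H : Type*} [NormedAddCommGroup H] [InnerProductSpace ℝ H] (a b c : H) :
    ⟪(3 : ℝ) • a - (4 : ℝ) • b + c, a⟫ =
      2 * (bdf2Energy a b - bdf2Energy b c) + (1 / 2) * ‖a - (2 : ℝ) • b + c‖ ^ 2 := by
  simp only [bdf2Energy, ← real_inner_self_eq_norm_sq, inner_sub_left, inner_sub_right,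
    inner_add_left, inner_add_right, real_inner_smul_left, real_inner_smul_right]
  rw [real_inner_comm b a, real_inner_comm c a, real_inner_comm c b]
  ring

lemma mul_le_mul_sq_add_sq_div {ε : ℝ} (hε : 0 < ε) (x y : ℝ) :
    x * y ≤ ε * x ^ 2 + y ^ 2 / (4 * ε) := by
  have key : ε * x ^ 2 + y ^ 2 / (4 * ε) - x * y = (2 * ε * x - y) ^ 2 / (4 * ε) := by
    field_simp
    ring
  have : 0 ≤ (2 * ε * x - y) ^ 2 / (4 * ε) := by positivity
  linarith

lemma le_add_sum_of_succ_le {e c d : ℕ → ℝ} {N : ℕ}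
    (hstep : ∀ n, 1 ≤ n → n + 1 ≤ N → e (n + 1) + c n ≤ e n + d n) :
    ∀ n, 1 ≤ n → n ≤ N →
      e n + ∑ k ∈ Finset.Icc 1 (n - 1), c k ≤ e 1 + ∑ k ∈ Finset.Icc 1 (n - 1), d k := by
  intro n hn hnN
  obtain ⟨m, rfl⟩ := Nat.exists_eq_add_of_le' hn
  simp only [Nat.add_sub_cancel]
  induction m with
  | zero => simp
  | succ m ih =>
    rw [Finset.sum_Icc_succ_top (by omega), Finset.sum_Icc_succ_top (by omega)]
    linarith [ih (by omega) (by omega), hstep (m + 1) (by omega) hnN]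

section Trilinear

variable {H K : Type*} [NormedAddCommGroup H] [InnerProductSpace ℝ H]
  [NormedAddCommGroup K] [InnerProductSpace ℝ K]
  {D : H →ₗ[ℝ] K} {XR : Submodule ℝ H} {σ : ℝ} {b : H →ₗ[ℝ] H →ₗ[ℝ] H →ₗ[ℝ] ℝ} {Cb : ℝ}
  {w a δ : H}

lemma abs_trilinear_le_of_inverse (hinv : ∀ φ ∈ XR, ‖D φ‖ ≤ √σ * ‖φ‖) (hCb : 0 ≤ Cb)
    (hb : ∀ w u v : H, w ∈ XR → u ∈ XR → v ∈ XR →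
      |b w u v| ≤ Cb * ‖D w‖ * ‖D u‖ * √‖v‖ * √‖D v‖)
    (hw : w ∈ XR) (ha : a ∈ XR) (hδ : δ ∈ XR) :
    |b w a δ| ≤ (Cb * √(√σ) * ‖D w‖ * ‖D a‖) * ‖δ‖ := by
  have hDδ : √‖D δ‖ ≤ √(√σ) * √‖δ‖ := by
    rw [← Real.sqrt_mul (Real.sqrt_nonneg σ)]
    exact Real.sqrt_le_sqrt (hinv δ hδ)
  calc |b w a δ| ≤ Cb * ‖D w‖ * ‖D a‖ * √‖δ‖ * √‖D δ‖ := hb w a δ hw ha hδ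
    _ ≤ Cb * ‖D w‖ * ‖D a‖ * √‖δ‖ * (√(√σ) * √‖δ‖) := by gcongr
    _ = (Cb * √(√σ) * ‖D w‖ * ‖D a‖) * (√‖δ‖ * √‖δ‖) := by ring
    _ = (Cb * √(√σ) * ‖D w‖ * ‖D a‖) * ‖δ‖ := by rw [Real.mul_self_sqrt (norm_nonneg δ)]

lemma abs_trilinear_le_of_timeStep (hinv : ∀ φ ∈ XR, ‖D φ‖ ≤ √σ * ‖φ‖) (hCb : 0 ≤ Cb)
    (hb : ∀ w u v : H, w ∈ XR → u ∈ XR → v ∈ XR →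
      |b w u v| ≤ Cb * ‖D w‖ * ‖D u‖ * √‖v‖ * √‖D v‖)
    {ν Δt : ℝ} (hν : 0 < ν) (hΔt : 0 < Δt)
    (hstep : 2 * Cb ^ 2 * √σ * (Δt / ν) * ‖D w‖ ^ 2 ≤ 1)
    (hw : w ∈ XR) (ha : a ∈ XR) (hδ : δ ∈ XR) :
    |b w a δ| ≤ ν / 2 * ‖D a‖ ^ 2 + ‖δ‖ ^ 2 / (4 * Δt) := by
  have hsq : (Cb * √(√σ) * ‖D w‖ * ‖D a‖) ^ 2 = Cb ^ 2 * √σ * ‖D w‖ ^ 2 * ‖D a‖ ^ 2 := by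
    rw [mul_pow, mul_pow, mul_pow, Real.sq_sqrt (Real.sqrt_nonneg σ)]
  have hcfl : Δt * (Cb ^ 2 * √σ * ‖D w‖ ^ 2) ≤ ν / 2 := by
    have := mul_le_mul_of_nonneg_left hstep (by positivity : (0 : ℝ) ≤ ν / 2)
    rw [show ν / 2 * (2 * Cb ^ 2 * √σ * (Δt / ν) * ‖D w‖ ^ 2)
      = Δt * (Cb ^ 2 * √σ * ‖D w‖ ^ 2) by field_simp] at this
    linarith
  calc |b w a δ| ≤ (Cb * √(√σ) * ‖D w‖ * ‖D a‖) * ‖δ‖ :=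
        abs_trilinear_le_of_inverse hinv hCb hb hw ha hδ
    _ ≤ Δt * (Cb * √(√σ) * ‖D w‖ * ‖D a‖) ^ 2 + ‖δ‖ ^ 2 / (4 * Δt) :=
        mul_le_mul_sq_add_sq_div hΔt _ _
    _ = Δt * (Cb ^ 2 * √σ * ‖D w‖ ^ 2) * ‖D a‖ ^ 2 + ‖δ‖ ^ 2 / (4 * Δt) := by
        rw [hsq]; ring
    _ ≤ ν / 2 * ‖D a‖ ^ 2 + ‖δ‖ ^ 2 / (4 * Δt) := by gcongr

lemma bdf2Energy_succ_le (hbskew : ∀ w v : H, b w v v = 0)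
    (hinv : ∀ φ ∈ XR, ‖D φ‖ ≤ √σ * ‖φ‖) (hCb : 0 ≤ Cb)
    (hb : ∀ w u v : H, w ∈ XR → u ∈ XR → v ∈ XR →
      |b w u v| ≤ Cb * ‖D w‖ * ‖D u‖ * √‖v‖ * √‖D v‖)
    {ν Δt : ℝ} (hν : 0 < ν) (hΔt : 0 < Δt) {v v₀ m : H} {f γ : ℝ}
    (hw : w ∈ XR) (ha : a ∈ XR) (hv : v ∈ XR) (hv₀ : v₀ ∈ XR)
    (hscheme : ⟪(2 * Δt)⁻¹ • ((3 : ℝ) • a - (4 : ℝ) • v + v₀), a⟫ + b m a a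
        + b w ((2 : ℝ) • v - v₀) a + ν * ⟪D a, D a⟫ = f)
    (hf : f ≤ γ * ‖D a‖)
    (hstep : 2 * Cb ^ 2 * √σ * (Δt / ν) * ‖D w‖ ^ 2 ≤ 1) :
    bdf2Energy a v + ν * Δt / 4 * ‖D a‖ ^ 2 ≤ bdf2Energy v v₀ + Δt / ν * γ ^ 2 := by
  set δ := a - (2 : ℝ) • v + v₀
  have hδ : δ ∈ XR := XR.add_mem (XR.sub_mem ha (XR.smul_mem _ hv)) hv₀
  have hconv : b w ((2 : ℝ) • v - v₀) a = b w a δ := by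
    rw [show (2 : ℝ) • v - v₀ = a - δ by simp only [δ]; abel, map_sub, LinearMap.sub_apply,
      hbskew, zero_sub]
    exact LinearMap.IsAlt.neg (hbskew w) δ a
  rw [real_inner_smul_left, inner_bdf2_self, hbskew, hconv, real_inner_self_eq_norm_sq]
    at hscheme
  have hbalance : 2 * (bdf2Energy a v - bdf2Energy v v₀) + (1 / 2) * ‖δ‖ ^ 2
      = 2 * Δt * (f - b w a δ - ν * ‖D a‖ ^ 2) := by
    rw [← hscheme]
    field_simp
    ring
  have hconv_lower : -(ν / 2 * ‖D a‖ ^ 2 + ‖δ‖ ^ 2 / (4 * Δt)) ≤ b w a δ :=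
    (neg_le_neg (abs_trilinear_le_of_timeStep hinv hCb hb hν hΔt hstep hw ha hδ)).trans
      (neg_abs_le _)
  have hforce : f ≤ ν / 4 * ‖D a‖ ^ 2 + γ ^ 2 / ν := by
    have := mul_le_mul_sq_add_sq_div (by positivity : 0 < ν / 4) ‖D a‖ γ
    rw [show 4 * (ν / 4) = ν by ring] at this
    linarith
  have hrhs : f - b w a δ - ν * ‖D a‖ ^ 2
      ≤ γ ^ 2 / ν - ν / 4 * ‖D a‖ ^ 2 + ‖δ‖ ^ 2 / (4 * Δt) := by
    linarith
  have hbound : 2 * (bdf2Energy a v - bdf2Energy v v₀) + (1 / 2) * ‖δ‖ ^ 2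
      ≤ 2 * (Δt / ν * γ ^ 2) - 2 * (ν * Δt / 4 * ‖D a‖ ^ 2) + (1 / 2) * ‖δ‖ ^ 2 :=
    calc _ = 2 * Δt * (f - b w a δ - ν * ‖D a‖ ^ 2) := hbalance
      _ ≤ 2 * Δt * (γ ^ 2 / ν - ν / 4 * ‖D a‖ ^ 2 + ‖δ‖ ^ 2 / (4 * Δt)) := by gcongr
      _ = _ := by field_simp; ring
  linarith

end Trilinear

theorem enB_pod_stability_general
    {H K : Type*} [NormedAddCommGroup H] [InnerProductSpace ℝ H]
    [NormedAddCommGroup K] [InnerProductSpace ℝ K]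
    (D : H →ₗ[ℝ] K) (XR : Submodule ℝ H)
    (σ : ℝ)
    (hinv : ∀ φ ∈ XR, ‖D φ‖ ≤ Real.sqrt σ * ‖φ‖)
    (b : H →ₗ[ℝ] H →ₗ[ℝ] H →ₗ[ℝ] ℝ)
    (hbskew : ∀ w v : H, b w v v = 0)
    (Cb : ℝ) (hCb : 0 < Cb)
    (hb : ∀ w u v : H, w ∈ XR → u ∈ XR → v ∈ XR →
      |b w u v| ≤ Cb * ‖D w‖ * ‖D u‖ * Real.sqrt ‖v‖ * Real.sqrt ‖D v‖)
    (ν Δt : ℝ) (hν : 0 < ν) (hΔt : 0 < Δt)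
    (J N : ℕ)
    (u : Fin J → ℕ → H) (hu : ∀ (j : Fin J) (n : ℕ), n ≤ N → u j n ∈ XR)
    (F : Fin J → ℕ → H →ₗ[ℝ] ℝ) (γ : Fin J → ℕ → ℝ)
    (hF : ∀ (j : Fin J) (n : ℕ), 2 ≤ n → n ≤ N →
      ∀ v ∈ XR, |F j n v| ≤ γ j n * ‖D v‖)
    (um : ℕ → H)
    (hum : ∀ n : ℕ, 1 ≤ n →
      um n = (J : ℝ)⁻¹ • ∑ j : Fin J, ((2 : ℝ) • u j n - u j (n - 1)))
    (u' : Fin J → ℕ → H)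
    (hu' : ∀ (j : Fin J) (n : ℕ), 1 ≤ n →
      u' j n = (2 : ℝ) • u j n - u j (n - 1) - um n)
    (hscheme : ∀ (j : Fin J) (n : ℕ), 1 ≤ n → n + 1 ≤ N → ∀ φ ∈ XR,
      ⟪(2 * Δt)⁻¹ • ((3 : ℝ) • u j (n + 1) - (4 : ℝ) • u j n + u j (n - 1)), φ⟫
        + b (um n) (u j (n + 1)) φ
        + b (u' j n) ((2 : ℝ) • u j n - u j (n - 1)) φ
        + ν * ⟪D (u j (n + 1)), D φ⟫ = F j (n + 1) φ)
    (hstep : ∀ (j : Fin J) (n : ℕ), 1 ≤ n → n + 1 ≤ N →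
      2 * Cb ^ 2 * Real.sqrt σ * (Δt / ν) * ‖D (u' j n)‖ ^ 2 ≤ 1) :
    ∀ (j : Fin J) (n : ℕ), 1 ≤ n → n ≤ N →
      (1 / 4) * ‖u j n‖ ^ 2 + (1 / 4) * ‖(2 : ℝ) • u j n - u j (n - 1)‖ ^ 2
          + (ν * Δt / 4) * ∑ n' ∈ Finset.Icc 1 (n - 1), ‖D (u j (n' + 1))‖ ^ 2 ≤
        (Δt / ν) * ∑ n' ∈ Finset.Icc 1 (n - 1), (γ j (n' + 1)) ^ 2
          + (1 / 4) * ‖u j 1‖ ^ 2 + (1 / 4) * ‖(2 : ℝ) • u j 1 - u j 0‖ ^ 2 := by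
  intro j
  have hmean : ∀ n, 1 ≤ n → n ≤ N → um n ∈ XR := fun n hn hnN => by
    rw [hum n hn]
    exact XR.smul_mem _ (XR.sum_mem fun i _ =>
      XR.sub_mem (XR.smul_mem _ (hu i n hnN)) (hu i (n - 1) (by omega)))
  have hfluct : ∀ n, 1 ≤ n → n ≤ N → u' j n ∈ XR := fun n hn hnN => by
    rw [hu' j n hn]
    exact XR.sub_mem (XR.sub_mem (XR.smul_mem _ (hu j n hnN)) (hu j (n - 1) (by omega)))
      (hmean n hn hnN)
  have henergy := le_add_sum_of_succ_le (e := fun n => bdf2Energy (u j n) (u j (n - 1)))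
    (c := fun n => ν * Δt / 4 * ‖D (u j (n + 1))‖ ^ 2) (d := fun n => Δt / ν * γ j (n + 1) ^ 2)
    fun n hn hnN => bdf2Energy_succ_le hbskew hinv hCb.le hb hν hΔt (hfluct n hn (by omega))
      (hu j _ hnN) (hu j n (by omega)) (hu j _ (by omega)) (hscheme j n hn hnN _ (hu j _ hnN))
      ((le_abs_self _).trans (hF j (n + 1) (by omega) hnN _ (hu j _ hnN))) (hstep j n hn hnN)
  intro n hn hnN
  have := henergy n hn hnN
  simp only [bdf2Energy, ← Finset.mul_sum, Nat.sub_self] at this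
  linarith

/-- Abstract form of the long-time stability theorem (Theorem 4.1 of the paper) for the
second-order ensemble-POD scheme EnB-POD: under the POD inverse inequality
`‖Dφ‖ ≤ σ^{1/2}‖φ‖` on `X_R`, skew-symmetry and the bound
`|b(w,u,v)| ≤ C_b ‖Dw‖‖Du‖‖v‖^{1/2}‖Dv‖^{1/2}` for the trilinear form, and the time-step
condition `2C_b²σ^{1/2}(Δt/ν)‖Du'^{j,n}‖² ≤ 1`, every solution of the scheme satisfies the
discrete energy bound. -/
theorem enB_pod_stability
    {H K : Type*} [NormedAddCommGroup H] [InnerProductSpace ℝ H]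
    [NormedAddCommGroup K] [InnerProductSpace ℝ K]
    (D : H →ₗ[ℝ] K) (XR : Submodule ℝ H)
    (σ : ℝ) (hσ : 0 ≤ σ)
    (hinv : ∀ φ ∈ XR, ‖D φ‖ ≤ Real.sqrt σ * ‖φ‖)
    (b : H →ₗ[ℝ] H →ₗ[ℝ] H →ₗ[ℝ] ℝ)
    (hbskew : ∀ w v : H, b w v v = 0)
    (Cb : ℝ) (hCb : 0 < Cb)
    (hb : ∀ w u v : H, w ∈ XR → u ∈ XR → v ∈ XR →
      |b w u v| ≤ Cb * ‖D w‖ * ‖D u‖ * Real.sqrt ‖v‖ * Real.sqrt ‖D v‖)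
    (ν Δt : ℝ) (hν : 0 < ν) (hΔt : 0 < Δt)
    (J N : ℕ) (hJ : 1 ≤ J) (hN : 1 ≤ N)
    (u : Fin J → ℕ → H) (hu : ∀ (j : Fin J) (n : ℕ), n ≤ N → u j n ∈ XR)
    (F : Fin J → ℕ → H →ₗ[ℝ] ℝ) (γ : Fin J → ℕ → ℝ)
    (hF : ∀ (j : Fin J) (n : ℕ), 2 ≤ n → n ≤ N →
      ∀ v ∈ XR, |F j n v| ≤ γ j n * ‖D v‖)
    (um : ℕ → H)
    (hum : ∀ n : ℕ, 1 ≤ n →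
      um n = (J : ℝ)⁻¹ • ∑ j : Fin J, ((2 : ℝ) • u j n - u j (n - 1)))
    (u' : Fin J → ℕ → H)
    (hu' : ∀ (j : Fin J) (n : ℕ), 1 ≤ n →
      u' j n = (2 : ℝ) • u j n - u j (n - 1) - um n)
    (hscheme : ∀ (j : Fin J) (n : ℕ), 1 ≤ n → n + 1 ≤ N → ∀ φ ∈ XR,
      ⟪(2 * Δt)⁻¹ • ((3 : ℝ) • u j (n + 1) - (4 : ℝ) • u j n + u j (n - 1)), φ⟫
        + b (um n) (u j (n + 1)) φ
        + b (u' j n) ((2 : ℝ) • u j n - u j (n - 1)) φ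
        + ν * ⟪D (u j (n + 1)), D φ⟫ = F j (n + 1) φ)
    (hstep : ∀ (j : Fin J) (n : ℕ), 1 ≤ n → n + 1 ≤ N →
      2 * Cb ^ 2 * Real.sqrt σ * (Δt / ν) * ‖D (u' j n)‖ ^ 2 ≤ 1) :
    ∀ (j : Fin J) (n : ℕ), 1 ≤ n → n ≤ N →
      (1 / 4) * ‖u j n‖ ^ 2 + (1 / 4) * ‖(2 : ℝ) • u j n - u j (n - 1)‖ ^ 2
          + (ν * Δt / 4) * ∑ n' ∈ Finset.Icc 1 (n - 1), ‖D (u j (n' + 1))‖ ^ 2 ≤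
        (Δt / ν) * ∑ n' ∈ Finset.Icc 1 (n - 1), (γ j (n' + 1)) ^ 2
          + (1 / 4) * ‖u j 1‖ ^ 2 + (1 / 4) * ‖(2 : ℝ) • u j 1 - u j 0‖ ^ 2 :=
  enB_pod_stability_general D XR σ hinv b hbskew Cb hCb hb ν Δt hν hΔt J N u hu F γ hF um hum u' hu'
    hscheme hstep
end

section
/- Let H and K be real inner product spaces, D : H → K a linear map, X_R ⊆ H a subspace, and σ ≥ 0 a constant such that ‖Dφ‖ ≤ σ^{1/2}‖φ‖ for all φ ∈ X_R. Let p₃ and p₆ be seminorms on H such that p₆(v) ≤ C_{se} ‖Dv‖ for all v ∈ X_R, for some constant C_{se} > 0. Let b : H × H × H → ℝ be a trilinear map satisfying b(w, v, v) = 0 for all w, v, and |b(w, u, v)| ≤ ½ p₃(w) ‖Du‖ p₆(v) + ½ p₃(w) p₆(u) ‖Dv‖ for all w, u, v ∈ X_R. Let ν > 0, Δt > 0, J ≥ 1, N ≥ 1, and for each j = 1,…,J let u^{j,0}, u^{j,1}, …, u^{j,N} ∈ X_R and let F^{j,n} : H → ℝ (n = 2,…,N) be linear functionals with |F^{j,n}(v)|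 ≤ γ_{j,n} ‖Dv‖ for all v ∈ X_R. For n ≥ 1 define ⟨u⟩^n := (1/J) Σ_{j=1}^J (2u^{j,n} − u^{j,n−1}) and u'^{j,n} := 2u^{j,n} − u^{j,n−1} − ⟨u⟩^n. Suppose that for n = 1,…,N−1 and all j, and all φ ∈ X_R, ⟨(3u^{j,n+1} − 4u^{j,n} + u^{j,n−1})/(2Δt), φ⟩ + b(⟨u⟩^n, u^{j,n+1}, φ) + b(u'^{j,n}, 2u^{j,n} − u^{j,n−1}, φ) + ν⟨Du^{j,n+1}, Dφ⟩ = F^{j,n+1}(φ), and that the time-step condition 2 C_{se}² σ (Δt/ν) p₃(u'^{j,n})² ≤ 1 holds for all j = 1,…,J and all n = 1,…,N−1. Then for every j and every 1 ≤ n ≤ N, (1/4)‖u^{j,n}‖² + (1/4)‖2u^{j,n} − u^{j,n−1}‖² + (νΔt/4) Σ_{n'=1}^{n−1} ‖Du^{j,n'+1}‖² ≤ (Δt/ν) Σ_{n'=1}^{n−1} γ_{j,n'+1}² + (1/4)‖u^{j,1}‖² + (1/4)‖2u^{j,1} − u^{j,0}‖². -/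
/-!
Testing the scheme with `φ = u^{j,n+1}` and using the BDF2 (G-stability) identity
`2⟪3a - 4b + c, a⟫ = ‖a‖² + ‖2a - b‖² - ‖b‖² - ‖2b - c‖² + ‖a - 2b + c‖²`
turns the scheme into a one-step energy balance. Skew-symmetry replaces the fluctuation term
`b(u', 2b - c, a)` by `-b(u', a - 2b + c, a)`; the Hölder bound, the Sobolev embedding and the
inverse inequality bound it by `C_se σ^{1/2} p₃(u') ‖a - 2b + c‖ ‖Da‖`, and Young's inequality
splits it into the numerical dissipation `‖a - 2b + c‖²` and a viscous term that the time-step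
condition absorbs. Summing the one-step estimates gives the bound.
-/

open RealInnerProductSpace Finset

theorem le_sum_Icc_of_succ_le {f g h : ℕ → ℝ} {N : ℕ}
    (hstep : ∀ n, 1 ≤ n → n + 1 ≤ N → f (n + 1) + g (n + 1) ≤ f n + h (n + 1)) :
    ∀ n, 1 ≤ n → n ≤ N →
      f n + ∑ n' ∈ Icc 1 (n - 1), g (n' + 1) ≤ f 1 + ∑ n' ∈ Icc 1 (n - 1), h (n' + 1) := by
  intro n hn
  induction n, hn using Nat.le_induction with
  | base => simp
  | succ n hn ih =>
    intro hnN
    obtain ⟨k, rfl⟩ : ∃ k, n = k + 1 := ⟨n - 1, by omega⟩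
    have hsplit (φ : ℕ → ℝ) :
        ∑ n' ∈ Icc 1 (k + 1), φ (n' + 1) = ∑ n' ∈ Icc 1 k, φ (n' + 1) + φ (k + 2) :=
      sum_Icc_succ_top (by omega) _
    simp only [Nat.add_sub_cancel, hsplit] at ih ⊢
    linarith [ih (by omega), hstep (k + 1) hn hnN]

section BDF2

variable {H : Type*} [NormedAddCommGroup H] [InnerProductSpace ℝ H]

theorem two_mul_inner_bdf2_eq (a b c : H) :
    2 * ⟪(3 : ℝ) • a - (4 : ℝ) • b + c, a⟫ =
      ‖a‖ ^ 2 + ‖(2 : ℝ) • a - b‖ ^ 2 - ‖b‖ ^ 2 - ‖(2 : ℝ) • b - c‖ ^ 2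
        + ‖a - (2 : ℝ) • b + c‖ ^ 2 := by
  simp only [← real_inner_self_eq_norm_sq, inner_sub_left, inner_sub_right, inner_add_left,
    inner_add_right, real_inner_smul_left, real_inner_smul_right, real_inner_comm a,
    real_inner_comm b c]
  ring

theorem bdf2_energy_step {a b c : H} {Δt ν A κ G B Fa : ℝ} (hΔt : 0 < Δt) (hν : 0 < ν)
    (hscheme : ⟪(2 * Δt)⁻¹ • ((3 : ℝ) • a - (4 : ℝ) • b + c), a⟫ + ν * A ^ 2 = Fa + B)
    (hB : B ≤ κ * ‖a - (2 : ℝ) • b + c‖ * A) (hF : Fa ≤ G * A) (hκ : 2 * Δt * κ ^ 2 ≤ ν) :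
    (1 / 4) * ‖a‖ ^ 2 + (1 / 4) * ‖(2 : ℝ) • a - b‖ ^ 2 + (ν * Δt / 4) * A ^ 2 ≤
      (1 / 4) * ‖b‖ ^ 2 + (1 / 4) * ‖(2 : ℝ) • b - c‖ ^ 2 + (Δt / ν) * G ^ 2 := by
  set d := ‖a - (2 : ℝ) • b + c‖
  have hbalance : ‖a‖ ^ 2 + ‖(2 : ℝ) • a - b‖ ^ 2 - ‖b‖ ^ 2 - ‖(2 : ℝ) • b - c‖ ^ 2 + d ^ 2
      = 4 * Δt * (Fa + B) - 4 * Δt * ν * A ^ 2 := by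
    rw [real_inner_smul_left] at hscheme
    rw [← two_mul_inner_bdf2_eq]
    field_simp at hscheme
    linarith
  have hyoungB : 4 * Δt * B ≤ d ^ 2 + 2 * Δt * ν * A ^ 2 := by
    linarith [sq_nonneg (d - 2 * Δt * κ * A), mul_le_mul_of_nonneg_left hB (by positivity :
      0 ≤ 4 * Δt), mul_le_mul_of_nonneg_left hκ (by positivity : 0 ≤ 2 * Δt * A ^ 2)]
  have hyoungF : 4 * Δt * Fa ≤ Δt * ν * A ^ 2 + 4 * (Δt / ν) * G ^ 2 := by
    have hsq : 0 ≤ (Δt / ν) * (ν * A - 2 * G) ^ 2 := by positivity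
    have hexp : (Δt / ν) * (ν * A - 2 * G) ^ 2
        = Δt * ν * A ^ 2 - 4 * Δt * (G * A) + 4 * (Δt / ν) * G ^ 2 := by
      field_simp
      ring
    linarith [mul_le_mul_of_nonneg_left hF (by positivity : 0 ≤ 4 * Δt)]
  linarith

end BDF2

section Convection

variable {H K : Type*} [NormedAddCommGroup H] [InnerProductSpace ℝ H]
  [NormedAddCommGroup K] [InnerProductSpace ℝ K]

theorem tested_with_self_of_skew {m w x y a X : H} {f ν : ℝ} (D : H →ₗ[ℝ] K)
    (b : H →ₗ[ℝ] H →ₗ[ℝ] H →ₗ[ℝ] ℝ) (hbskew : ∀ w v : H, b w v v = 0)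
    (h : ⟪X, a⟫ + b m a a + b w ((2 : ℝ) • x - y) a + ν * ⟪D a, D a⟫ = f) :
    ⟪X, a⟫ + ν * ‖D a‖ ^ 2 = f + b w (a - (2 : ℝ) • x + y) a := by
  have hsplit : (2 : ℝ) • x - y = a - (a - (2 : ℝ) • x + y) := by abel
  rw [hsplit, map_sub, LinearMap.sub_apply, hbskew, hbskew, real_inner_self_eq_norm_sq] at h
  linarith

theorem abs_convection_le (D : H →ₗ[ℝ] K) (XR : Submodule ℝ H) {σ Cse : ℝ}
    (hinv : ∀ φ ∈ XR, ‖D φ‖ ≤ Real.sqrt σ * ‖φ‖) (p₃ p₆ : Seminorm ℝ H) (hCse : 0 ≤ Cse)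
    (hp₆ : ∀ v ∈ XR, p₆ v ≤ Cse * ‖D v‖) (b : H →ₗ[ℝ] H →ₗ[ℝ] H →ₗ[ℝ] ℝ)
    (hb : ∀ w u v : H, w ∈ XR → u ∈ XR → v ∈ XR →
      |b w u v| ≤ (1 / 2) * p₃ w * ‖D u‖ * p₆ v + (1 / 2) * p₃ w * p₆ u * ‖D v‖)
    {w d a : H} (hw : w ∈ XR) (hd : d ∈ XR) (ha : a ∈ XR) :
    |b w d a| ≤ Cse * Real.sqrt σ * p₃ w * ‖d‖ * ‖D a‖ :=
  calc |b w d a|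
      ≤ (1 / 2) * p₃ w * ‖D d‖ * p₆ a + (1 / 2) * p₃ w * p₆ d * ‖D a‖ := hb w d a hw hd ha
    _ ≤ (1 / 2) * p₃ w * ‖D d‖ * (Cse * ‖D a‖) + (1 / 2) * p₃ w * (Cse * ‖D d‖) * ‖D a‖ := by
        gcongr
        exacts [hp₆ a ha, hp₆ d hd]
    _ = Cse * p₃ w * ‖D d‖ * ‖D a‖ := by ring
    _ ≤ Cse * p₃ w * (Real.sqrt σ * ‖d‖) * ‖D a‖ := by gcongr; exact hinv d hd
    _ = Cse * Real.sqrt σ * p₃ w * ‖d‖ * ‖D a‖ := by ring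

end Convection

theorem two_mul_sq_le_of_time_step {σ Cse Δt ν P : ℝ} (hσ : 0 ≤ σ) (hν : 0 < ν)
    (hstep : 2 * Cse ^ 2 * σ * (Δt / ν) * P ^ 2 ≤ 1) :
    2 * Δt * (Cse * Real.sqrt σ * P) ^ 2 ≤ ν := by
  have h := mul_le_mul_of_nonneg_left hstep hν.le
  rw [mul_pow, mul_pow, Real.sq_sqrt hσ]
  field_simp at h
  linarith

theorem enB_pod_stability_3d_general
    {H K : Type*} [NormedAddCommGroup H] [InnerProductSpace ℝ H]
    [NormedAddCommGroup K] [InnerProductSpace ℝ K]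
    (D : H →ₗ[ℝ] K) (XR : Submodule ℝ H)
    (σ : ℝ) (hσ : 0 ≤ σ)
    (hinv : ∀ φ ∈ XR, ‖D φ‖ ≤ Real.sqrt σ * ‖φ‖)
    (p₃ p₆ : Seminorm ℝ H)
    (Cse : ℝ) (hCse : 0 < Cse)
    (hp₆ : ∀ v ∈ XR, p₆ v ≤ Cse * ‖D v‖)
    (b : H →ₗ[ℝ] H →ₗ[ℝ] H →ₗ[ℝ] ℝ)
    (hbskew : ∀ w v : H, b w v v = 0)
    (hb : ∀ w u v : H, w ∈ XR → u ∈ XR → v ∈ XR →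
      |b w u v| ≤ (1 / 2) * p₃ w * ‖D u‖ * p₆ v + (1 / 2) * p₃ w * p₆ u * ‖D v‖)
    (ν Δt : ℝ) (hν : 0 < ν) (hΔt : 0 < Δt)
    (J N : ℕ)
    (u : Fin J → ℕ → H) (hu : ∀ (j : Fin J) (n : ℕ), n ≤ N → u j n ∈ XR)
    (F : Fin J → ℕ → H →ₗ[ℝ] ℝ) (γ : Fin J → ℕ → ℝ)
    (hF : ∀ (j : Fin J) (n : ℕ), 2 ≤ n → n ≤ N →
      ∀ v ∈ XR, |F j n v| ≤ γ j n * ‖D v‖)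
    (um : ℕ → H)
    (hum : ∀ n : ℕ, 1 ≤ n →
      um n = (J : ℝ)⁻¹ • ∑ j : Fin J, ((2 : ℝ) • u j n - u j (n - 1)))
    (u' : Fin J → ℕ → H)
    (hu' : ∀ (j : Fin J) (n : ℕ), 1 ≤ n →
      u' j n = (2 : ℝ) • u j n - u j (n - 1) - um n)
    (hscheme : ∀ (j : Fin J) (n : ℕ), 1 ≤ n → n + 1 ≤ N → ∀ φ ∈ XR,
      ⟪(2 * Δt)⁻¹ • ((3 : ℝ) • u j (n + 1) - (4 : ℝ) • u j n + u j (n - 1)), φ⟫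
        + b (um n) (u j (n + 1)) φ
        + b (u' j n) ((2 : ℝ) • u j n - u j (n - 1)) φ
        + ν * ⟪D (u j (n + 1)), D φ⟫ = F j (n + 1) φ)
    (hstep : ∀ (j : Fin J) (n : ℕ), 1 ≤ n → n + 1 ≤ N →
      2 * Cse ^ 2 * σ * (Δt / ν) * (p₃ (u' j n)) ^ 2 ≤ 1) :
    ∀ (j : Fin J) (n : ℕ), 1 ≤ n → n ≤ N →
      (1 / 4) * ‖u j n‖ ^ 2 + (1 / 4) * ‖(2 : ℝ) • u j n - u j (n - 1)‖ ^ 2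
          + (ν * Δt / 4) * ∑ n' ∈ Finset.Icc 1 (n - 1), ‖D (u j (n' + 1))‖ ^ 2 ≤
        (Δt / ν) * ∑ n' ∈ Finset.Icc 1 (n - 1), (γ j (n' + 1)) ^ 2
          + (1 / 4) * ‖u j 1‖ ^ 2 + (1 / 4) * ‖(2 : ℝ) • u j 1 - u j 0‖ ^ 2 := by
  intro j
  have hum_mem : ∀ n, 1 ≤ n → n ≤ N → um n ∈ XR := fun n hn hnN => by
    rw [hum n hn]
    exact XR.smul_mem _ (XR.sum_mem fun i _ =>
      XR.sub_mem (XR.smul_mem _ (hu i n hnN)) (hu i (n - 1) (by omega)))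
  have hu'_mem : ∀ n, 1 ≤ n → n ≤ N → u' j n ∈ XR := fun n hn hnN => by
    rw [hu' j n hn]
    exact XR.sub_mem (XR.sub_mem (XR.smul_mem _ (hu j n hnN)) (hu j (n - 1) (by omega)))
      (hum_mem n hn hnN)
  have henergy : ∀ n, 1 ≤ n → n + 1 ≤ N →
      (1 / 4) * ‖u j (n + 1)‖ ^ 2 + (1 / 4) * ‖(2 : ℝ) • u j (n + 1) - u j n‖ ^ 2
          + (ν * Δt / 4) * ‖D (u j (n + 1))‖ ^ 2 ≤
        (1 / 4) * ‖u j n‖ ^ 2 + (1 / 4) * ‖(2 : ℝ) • u j n - u j (n - 1)‖ ^ 2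
          + (Δt / ν) * γ j (n + 1) ^ 2 := fun n hn hnN => by
    have ha := hu j (n + 1) hnN
    have hd : u j (n + 1) - (2 : ℝ) • u j n + u j (n - 1) ∈ XR :=
      XR.add_mem (XR.sub_mem ha (XR.smul_mem _ (hu j n (by omega)))) (hu j (n - 1) (by omega))
    exact bdf2_energy_step hΔt hν
      (tested_with_self_of_skew D b hbskew (hscheme j n hn hnN _ ha))
      ((le_abs_self _).trans (abs_convection_le D XR hinv p₃ p₆ hCse.le hp₆ b hb
        (hu'_mem n hn (by omega)) hd ha))
      ((le_abs_self _).trans (hF j (n + 1) (by omega) hnN _ ha))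
      (two_mul_sq_le_of_time_step hσ hν (hstep j n hn hnN))
  intro n hn hnN
  have htel := le_sum_Icc_of_succ_le (f := fun n => (1 / 4) * ‖u j n‖ ^ 2
      + (1 / 4) * ‖(2 : ℝ) • u j n - u j (n - 1)‖ ^ 2)
    (g := fun n => (ν * Δt / 4) * ‖D (u j n)‖ ^ 2) (h := fun n => (Δt / ν) * γ j n ^ 2)
    henergy n hn hnN
  simp only [← Finset.mul_sum] at htel
  linarith

/-- Abstract form of the improved three-dimensional stability theorem (Theorem 4.2 of the
paper) for the second-order ensemble-POD scheme: under the POD inverse inequality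
`‖Dφ‖ ≤ σ^{1/2}‖φ‖` on `X_R`, the Sobolev embedding `p₆(v) ≤ C_se ‖Dv‖`, skew-symmetry and
the Hölder bound `|b(w,u,v)| ≤ ½p₃(w)‖Du‖p₆(v) + ½p₃(w)p₆(u)‖Dv‖` for the trilinear form,
and the time-step condition `2C_se²σ(Δt/ν)p₃(u'^{j,n})² ≤ 1`, every solution of the scheme
satisfies the discrete energy bound. -/
theorem enB_pod_stability_3d
    {H K : Type*} [NormedAddCommGroup H] [InnerProductSpace ℝ H]
    [NormedAddCommGroup K] [InnerProductSpace ℝ K]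
    (D : H →ₗ[ℝ] K) (XR : Submodule ℝ H)
    (σ : ℝ) (hσ : 0 ≤ σ)
    (hinv : ∀ φ ∈ XR, ‖D φ‖ ≤ Real.sqrt σ * ‖φ‖)
    (p₃ p₆ : Seminorm ℝ H)
    (Cse : ℝ) (hCse : 0 < Cse)
    (hp₆ : ∀ v ∈ XR, p₆ v ≤ Cse * ‖D v‖)
    (b : H →ₗ[ℝ] H →ₗ[ℝ] H →ₗ[ℝ] ℝ)
    (hbskew : ∀ w v : H, b w v v = 0)
    (hb : ∀ w u v : H, w ∈ XR → u ∈ XR → v ∈ XR →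
      |b w u v| ≤ (1 / 2) * p₃ w * ‖D u‖ * p₆ v + (1 / 2) * p₃ w * p₆ u * ‖D v‖)
    (ν Δt : ℝ) (hν : 0 < ν) (hΔt : 0 < Δt)
    (J N : ℕ) (hJ : 1 ≤ J) (hN : 1 ≤ N)
    (u : Fin J → ℕ → H) (hu : ∀ (j : Fin J) (n : ℕ), n ≤ N → u j n ∈ XR)
    (F : Fin J → ℕ → H →ₗ[ℝ] ℝ) (γ : Fin J → ℕ → ℝ)
    (hF : ∀ (j : Fin J) (n : ℕ), 2 ≤ n → n ≤ N →
      ∀ v ∈ XR, |F j n v| ≤ γ j n * ‖D v‖)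
    (um : ℕ → H)
    (hum : ∀ n : ℕ, 1 ≤ n →
      um n = (J : ℝ)⁻¹ • ∑ j : Fin J, ((2 : ℝ) • u j n - u j (n - 1)))
    (u' : Fin J → ℕ → H)
    (hu' : ∀ (j : Fin J) (n : ℕ), 1 ≤ n →
      u' j n = (2 : ℝ) • u j n - u j (n - 1) - um n)
    (hscheme : ∀ (j : Fin J) (n : ℕ), 1 ≤ n → n + 1 ≤ N → ∀ φ ∈ XR,
      ⟪(2 * Δt)⁻¹ • ((3 : ℝ) • u j (n + 1) - (4 : ℝ) • u j n + u j (n - 1)), φ⟫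
        + b (um n) (u j (n + 1)) φ
        + b (u' j n) ((2 : ℝ) • u j n - u j (n - 1)) φ
        + ν * ⟪D (u j (n + 1)), D φ⟫ = F j (n + 1) φ)
    (hstep : ∀ (j : Fin J) (n : ℕ), 1 ≤ n → n + 1 ≤ N →
      2 * Cse ^ 2 * σ * (Δt / ν) * (p₃ (u' j n)) ^ 2 ≤ 1) :
    ∀ (j : Fin J) (n : ℕ), 1 ≤ n → n ≤ N →
      (1 / 4) * ‖u j n‖ ^ 2 + (1 / 4) * ‖(2 : ℝ) • u j n - u j (n - 1)‖ ^ 2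
          + (ν * Δt / 4) * ∑ n' ∈ Finset.Icc 1 (n - 1), ‖D (u j (n' + 1))‖ ^ 2 ≤
        (Δt / ν) * ∑ n' ∈ Finset.Icc 1 (n - 1), (γ j (n' + 1)) ^ 2
          + (1 / 4) * ‖u j 1‖ ^ 2 + (1 / 4) * ‖(2 : ℝ) • u j 1 - u j 0‖ ^ 2 :=
  enB_pod_stability_3d_general D XR σ hσ hinv p₃ p₆ Cse hCse hp₆ b hbskew hb ν Δt hν hΔt J N u hu F
    γ hF um hum u' hu' hscheme hstep
end
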